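/- Let $\mathcal{T}$ be an $R$-linear triangulated category, $C, M \in \mathcal{T}$, and $x \in R$ homogeneous. Then the canonical morphism $\Sigma^{-1}(M /\!\!/ x) \to M$ is $C$-ghost if and only if the canonical morphism $\Sigma^{|x|} C \to C /\!\!/ x$ is $M$-coghost (induces zero on $\mathrm{Hom}^*_{\mathcal{T}}(-, M)$). -/

import Mathlib

/-!
Both conditions say that `x` acts injectively on `Hom^*(C, M)`. The long exact
`Hom(C, -)`-sequence of the triangle on `x(M)` shows that `h_M` is `C`-ghost iff postcomposition
with `x(M)` is injective on `Hom^*(C, M)`; dually, the `Hom(-, M)`-sequence of the triangle on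
`x(C)` shows that `Σ^d C ⟶ C ⫽ x` is `M`-coghost iff precomposition with `x(C)` is injective.
Naturality of `x` together with its compatibility with the shift identifies the two actions up to
isomorphism.
-/

open CategoryTheory Category Limits Pretriangulated

universe v u

variable (T : Type u) [Category.{v} T] [Preadditive T] [HasZeroObject T]
  [HasShift T ℤ] [∀ n : ℤ, (CategoryTheory.shiftFunctor T n).Additive] [Pretriangulated T]

/-- A homogeneous element of degree `d` of a graded-commutative ring acting on the
triangulated category `T`, i.e. an element of the graded center: a family of morphisms
`x(M) : M ⟶ Σ^d M`, natural in `M` and commuting with the suspension up to the sign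
`(-1)^d`. -/
structure CentralElement (d : ℤ) where
  app : ∀ M : T, M ⟶ M⟦d⟧
  natural : ∀ {M N : T} (f : M ⟶ N), app M ≫ f⟦d⟧' = f ≫ app N
  shift_comm : ∀ M : T, app (M⟦(1:ℤ)⟧) =
    (((-1 : ℤˣ) ^ d : ℤˣ) : ℤ) • ((app M)⟦(1:ℤ)⟧' ≫ (shiftComm M d 1).hom)

/-- A morphism `f` is `C`-ghost if it induces zero on `Hom^*_T(C,-)`. -/
def IsGhost (C : T) {A B : T} (f : A ⟶ B) : Prop :=
  ∀ (n : ℤ) (g : C⟦n⟧ ⟶ A), g ≫ f = 0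

/-- A morphism `f` is `M`-coghost if it induces zero on `Hom^*_T(-,M)`. -/
def IsCoghost (M : T) {A B : T} (f : A ⟶ B) : Prop :=
  ∀ (n : ℤ) (g : B ⟶ M⟦n⟧), f ≫ g = 0

/-- `x` acts as a non-zero divisor on the graded module `Hom^*_T(C,M)`. -/
def IsRegularOn {d : ℤ} (x : CentralElement T d) (C M : T) : Prop :=
  ∀ (n : ℤ) (f : C⟦n⟧ ⟶ M), f ≫ x.app M = 0 → f = 0

namespace CategoryTheory

section HomInjectivity

variable {𝒞 𝒟 : Type*} [Category 𝒞] [Category 𝒟] [HasZeroMorphisms 𝒞] [HasZeroMorphisms 𝒟]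

def PostcompInjective (X : 𝒞) {A B : 𝒞} (a : A ⟶ B) : Prop :=
  ∀ f : X ⟶ A, f ≫ a = 0 → f = 0

def PrecompInjective (Y : 𝒞) {A B : 𝒞} (a : A ⟶ B) : Prop :=
  ∀ g : B ⟶ Y, a ≫ g = 0 → g = 0

variable {X X' Y Y' A B A' B' : 𝒞}

lemma PostcompInjective.of_iso (i : X ≅ X') {a : A ⟶ B} (h : PostcompInjective X a) :
    PostcompInjective X' a := fun f hf =>
  (cancel_epi i.hom).1 (by simpa using h (i.hom ≫ f) (by rw [assoc, hf, comp_zero]))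

lemma postcompInjective_congr (i : X ≅ X') (a : A ⟶ B) :
    PostcompInjective X a ↔ PostcompInjective X' a :=
  ⟨.of_iso i, .of_iso i.symm⟩

lemma PrecompInjective.of_iso (i : Y ≅ Y') {a : A ⟶ B} (h : PrecompInjective Y a) :
    PrecompInjective Y' a := fun g hg =>
  (cancel_mono i.inv).1 (by simpa using h (g ≫ i.inv) (by rw [← assoc, hg, zero_comp]))

lemma precompInjective_congr (i : Y ≅ Y') (a : A ⟶ B) :
    PrecompInjective Y a ↔ PrecompInjective Y' a :=
  ⟨.of_iso i, .of_iso i.symm⟩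

lemma PostcompInjective.of_arrowIso {a : A ⟶ B} {b : A' ⟶ B'} (e : Arrow.mk a ≅ Arrow.mk b)
    (h : PostcompInjective X a) : PostcompInjective X b := fun f hf =>
  (cancel_mono e.inv.left).1 <| by
    simpa using h (f ≫ e.inv.left) (by rw [assoc, Arrow.w_mk, reassoc_of% hf, zero_comp])

lemma postcompInjective_congr_arrowIso {a : A ⟶ B} {b : A' ⟶ B'} (e : Arrow.mk a ≅ Arrow.mk b) :
    PostcompInjective X a ↔ PostcompInjective X b :=
  ⟨.of_arrowIso e, .of_arrowIso e.symm⟩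

lemma Functor.postcompInjective_map_iff (F : 𝒞 ⥤ 𝒟) [F.Full] [F.Faithful]
    [F.PreservesZeroMorphisms] (X : 𝒞) (a : A ⟶ B) :
    PostcompInjective (F.obj X) (F.map a) ↔ PostcompInjective X a := by
  constructor
  · intro h f hf
    exact F.map_injective (by simpa using h (F.map f) (by rw [← F.map_comp, hf, F.map_zero]))
  · intro h f hf
    rw [← F.map_preimage f, h (F.preimage f) (F.map_injective (by simpa using hf)), F.map_zero]

end HomInjectivity

section Shift

variable {𝒞 : Type*} [Category 𝒞] [HasZeroMorphisms 𝒞] [HasShift 𝒞 ℤ]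

lemma forall_postcompInjective_shift_iff (C : 𝒞) {A B : 𝒞} (a : A ⟶ B) (k : ℤ) :
    (∀ n : ℤ, PostcompInjective (C⟦n⟧) (a⟦k⟧')) ↔ ∀ n : ℤ, PostcompInjective (C⟦n⟧) a := by
  have h (n : ℤ) : PostcompInjective (C⟦n⟧) (a⟦k⟧') ↔ PostcompInjective (C⟦n - k⟧) a :=
    (postcompInjective_congr ((shiftFunctorAdd' 𝒞 (n - k) k n (by omega)).app C) _).trans
      ((shiftFunctor 𝒞 k).postcompInjective_map_iff _ a)
  simp only [h]
  exact (Equiv.subRight k).forall_congr_right (q := fun n => PostcompInjective (C⟦n⟧) a)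

lemma forall_postcompInjective_map_shift_iff (C : 𝒞) {A B : 𝒞} (a : A ⟶ B) :
    (∀ n : ℤ, PostcompInjective C (a⟦n⟧')) ↔ ∀ n : ℤ, PostcompInjective (C⟦n⟧) a := by
  have h (n : ℤ) : PostcompInjective C (a⟦n⟧') ↔ PostcompInjective (C⟦-n⟧) a :=
    (postcompInjective_congr ((shiftFunctorCompIsoId 𝒞 (-n) n (by omega)).app C) _).symm.trans
      ((shiftFunctor 𝒞 n).postcompInjective_map_iff _ a)
  simp only [h]
  exact (Equiv.neg ℤ).forall_congr_right (q := fun n => PostcompInjective (C⟦n⟧) a)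

end Shift

section Triangle

variable {𝒞 : Type*} [Category 𝒞] [Preadditive 𝒞] [HasZeroObject 𝒞] [HasShift 𝒞 ℤ]
  [∀ n : ℤ, (CategoryTheory.shiftFunctor 𝒞 n).Additive] [Pretriangulated 𝒞]

lemma Pretriangulated.Triangle.forall_comp_mor₃_eq_zero_iff (tr : Triangle 𝒞)
    (htr : tr ∈ distTriang 𝒞) (X : 𝒞) :
    (∀ g : X ⟶ tr.obj₃, g ≫ tr.mor₃ = 0) ↔ PostcompInjective X (tr.mor₁⟦(1 : ℤ)⟧') := by
  constructor
  · intro h f hf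
    obtain ⟨g, rfl⟩ := coyoneda_exact₁ tr htr f hf
    exact h g
  · intro h g
    exact h _ (by rw [assoc, comp_distTriang_mor_zero₃₁ tr htr, comp_zero])

lemma Pretriangulated.Triangle.forall_mor₂_comp_eq_zero_iff (tr : Triangle 𝒞)
    (htr : tr ∈ distTriang 𝒞) (Y : 𝒞) :
    (∀ g : tr.obj₃ ⟶ Y, tr.mor₂ ≫ g = 0) ↔ PrecompInjective Y tr.mor₁ := by
  constructor
  · intro h f hf
    obtain ⟨g, rfl⟩ := yoneda_exact₂ tr htr f hf
    exact h g
  · intro h g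
    exact h _ (by rw [← assoc, comp_distTriang_mor_zero₁₂ tr htr, zero_comp])

end Triangle

end CategoryTheory

namespace CentralElement

variable {𝒞 : Type*} [Category 𝒞] [Preadditive 𝒞] [HasShift 𝒞 ℤ] {d : ℤ}
  (x : CentralElement 𝒞 d)

def arrowIsoOfIso {A B : 𝒞} (i : A ≅ B) : Arrow.mk (x.app A) ≅ Arrow.mk (x.app B) :=
  Arrow.isoMk' _ _ i ((shiftFunctor 𝒞 d).mapIso i) (x.natural i.hom).symm

-- An isomorphism of arrows absorbs the signs coming from `shift_comm`.
def CommutesWithShift (n : ℤ) : Prop :=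
  ∀ A : 𝒞, Nonempty (Arrow.mk (x.app (A⟦n⟧)) ≅ Arrow.mk ((x.app A)⟦n⟧'))

lemma commutesWithShift_zero : x.CommutesWithShift 0 := fun A =>
  ⟨x.arrowIsoOfIso ((shiftFunctorZero 𝒞 ℤ).app A) ≪≫
    (Arrow.isoOfNatIso (shiftFunctorZero 𝒞 ℤ) (Arrow.mk (x.app A))).symm⟩

lemma commutesWithShift_one : x.CommutesWithShift 1 := fun A => by
  rw [x.shift_comm A]
  exact ⟨Arrow.isoMk' _ _ (((-1 : ℤˣ) ^ d) • Iso.refl _) (shiftComm A d 1).symm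
    (by simp only [Preadditive.smul_iso_hom, Iso.refl_hom, Iso.symm_hom, Units.smul_def,
      Preadditive.zsmul_comp, id_comp, assoc, Iso.hom_inv_id, comp_id])⟩

lemma CommutesWithShift.add {a b : ℤ} (ha : x.CommutesWithShift a)
    (hb : x.CommutesWithShift b) : x.CommutesWithShift (a + b) := fun A =>
  ⟨x.arrowIsoOfIso ((shiftFunctorAdd 𝒞 a b).app A) ≪≫ (hb (A⟦a⟧)).some ≪≫
    (shiftFunctor 𝒞 b).mapArrow.mapIso (ha A).some ≪≫
    (Arrow.isoOfNatIso (shiftFunctorAdd 𝒞 a b) (Arrow.mk (x.app A))).symm⟩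

lemma commutesWithShift_neg_one : x.CommutesWithShift (-1) := fun A =>
  ⟨(Arrow.isoOfNatIso (shiftFunctorCompIsoId 𝒞 (1 : ℤ) (-1) (by omega))
      (Arrow.mk (x.app (A⟦(-1 : ℤ)⟧)))).symm ≪≫
    (shiftFunctor 𝒞 (-1 : ℤ)).mapArrow.mapIso (x.commutesWithShift_one (A⟦(-1 : ℤ)⟧)).some.symm ≪≫
    (shiftFunctor 𝒞 (-1 : ℤ)).mapArrow.mapIso
      (x.arrowIsoOfIso ((shiftFunctorCompIsoId 𝒞 (-1 : ℤ) 1 (by omega)).app A))⟩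

lemma commutesWithShift (n : ℤ) : x.CommutesWithShift n := by
  induction n using Int.induction_on with
  | zero => exact x.commutesWithShift_zero
  | succ m ih => exact ih.add x x.commutesWithShift_one
  | pred m ih => exact ih.add x x.commutesWithShift_neg_one

lemma precompInjective_shift_iff (C Y : 𝒞) :
    PrecompInjective (Y⟦d⟧) (x.app C) ↔ PostcompInjective C (x.app Y) := by
  constructor
  · intro h f hf
    exact (shiftFunctor 𝒞 d).map_injective
      (by simpa using h (f⟦d⟧') (by rw [x.natural, hf]))
  · intro h g hg
    have hpre := x.natural ((shiftFunctor 𝒞 d).preimage g)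
    rw [Functor.map_preimage, hg] at hpre
    rw [← (shiftFunctor 𝒞 d).map_preimage g, h _ hpre.symm, Functor.map_zero]

lemma forall_precompInjective_iff_isRegularOn (C M : 𝒞) :
    (∀ n : ℤ, PrecompInjective (M⟦n⟧) (x.app C)) ↔ IsRegularOn 𝒞 x C M :=
  calc (∀ n : ℤ, PrecompInjective (M⟦n⟧) (x.app C))
      ↔ ∀ n : ℤ, PrecompInjective ((M⟦n⟧)⟦d⟧) (x.app C) := by
        have h (n : ℤ) : PrecompInjective ((M⟦n⟧)⟦d⟧) (x.app C) ↔
            PrecompInjective (M⟦n + d⟧) (x.app C) :=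
          (precompInjective_congr ((shiftFunctorAdd 𝒞 n d).app M) _).symm
        simp only [h]
        exact ((Equiv.addRight d).forall_congr_right
          (q := fun n => PrecompInjective (M⟦n⟧) (x.app C))).symm
    _ ↔ ∀ n : ℤ, PostcompInjective C (x.app (M⟦n⟧)) :=
        forall_congr' fun n => x.precompInjective_shift_iff C _
    _ ↔ ∀ n : ℤ, PostcompInjective C ((x.app M)⟦n⟧') :=
        forall_congr' fun n => postcompInjective_congr_arrowIso (x.commutesWithShift n M).some
    _ ↔ IsRegularOn 𝒞 x C M := forall_postcompInjective_map_shift_iff C (x.app M)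

end CentralElement

section Ghost

variable {𝒞 : Type*} [Category 𝒞] [Preadditive 𝒞] [HasZeroObject 𝒞] [HasShift 𝒞 ℤ]
  [∀ n : ℤ, (CategoryTheory.shiftFunctor 𝒞 n).Additive] [Pretriangulated 𝒞]

lemma isGhost_mor₃_iff (tr : Triangle 𝒞) (htr : tr ∈ distTriang 𝒞) (C : 𝒞) :
    IsGhost 𝒞 C tr.mor₃ ↔ ∀ n : ℤ, PostcompInjective (C⟦n⟧) tr.mor₁ :=
  (forall_congr' fun n => tr.forall_comp_mor₃_eq_zero_iff htr (C⟦n⟧)).trans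
    (forall_postcompInjective_shift_iff C tr.mor₁ 1)

lemma isCoghost_mor₂_iff (tr : Triangle 𝒞) (htr : tr ∈ distTriang 𝒞) (M : 𝒞) :
    IsCoghost 𝒞 M tr.mor₂ ↔ ∀ n : ℤ, PrecompInjective (M⟦n⟧) tr.mor₁ :=
  forall_congr' fun n => tr.forall_mor₂_comp_eq_zero_iff htr (M⟦n⟧)

end Ghost

theorem stmt19 {d : ℤ} (x : CentralElement T d) (C M : T)
    (KC KM : T)
    (gC : C⟦d⟧ ⟶ KC) (hC : KC ⟶ C⟦(1:ℤ)⟧)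
    (htC : Triangle.mk (x.app C) gC hC ∈ distTriang T)
    (gM : M⟦d⟧ ⟶ KM) (hM : KM ⟶ M⟦(1:ℤ)⟧)
    (htM : Triangle.mk (x.app M) gM hM ∈ distTriang T) :
    IsGhost T C hM ↔ IsCoghost T M gC :=
  calc IsGhost T C hM ↔ IsRegularOn T x C M := isGhost_mor₃_iff _ htM C
    _ ↔ ∀ n : ℤ, PrecompInjective (M⟦n⟧) (x.app C) :=
      (x.forall_precompInjective_iff_isRegularOn C M).symm
    _ ↔ IsCoghost T M gC := (isCoghost_mor₂_iff _ htC M).symm
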